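/- arXiv:2108.05451 — 2 statements merged into one kernel-verified Lean document; each statement's English description precedes it below -/
import Mathlib

section
/- Let f(x) = c₂·𝟙(x ≥ c₁) with integer c₁ ≥ 1 and c₂ > 0. If β c₂ λ(W) / (δ c₁) < 1, then the origin is a globally asymptotically stable equilibrium of the mean field hypergraph SIS system dp_i/dt = β ∑_k ∑_{h∈C_k} I_{ih} (∑_{l=1}^k f(l) Ψ(h,l))(1 − p_i) − δ p_i. -/
open Finset Filter

/-- `Ψ(h,l)` for a hyperedge `e`: probability that exactly `l` nodes of `e` are infected,
under independence. -/
noncomputable def PsiE {n : ℕ} (e : Finset (Fin n)) (P : Fin n → ℝ) (l : ℕ) : ℝ :=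
  ∑ J ∈ e.powersetCard l, (∏ j ∈ J, P j) * ∏ j ∈ e \ J, (1 - P j)

/-- The hyperedge of column `h` of the incidence matrix `Inc`. -/
def edgeOf {n m : ℕ} (Inc : Fin n → Fin m → ℕ) (h : Fin m) : Finset (Fin n) :=
  Finset.univ.filter (fun j => Inc j h = 1)

/-- The mean field vector field
`g_i(P) = β ∑_h I_{ih} (∑_{l=1}^{|h|} f(l) Ψ(h,l)) (1 − p_i) − δ p_i`. -/
noncomputable def meanFieldG (n m : ℕ) (Inc : Fin n → Fin m → ℕ) (β δ : ℝ) (f : ℕ → ℝ)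
    (P : Fin n → ℝ) : Fin n → ℝ := fun i =>
  β * (∑ h : Fin m, (Inc i h : ℝ) *
      ∑ l ∈ Finset.Icc 1 (edgeOf Inc h).card, f l * PsiE (edgeOf Inc h) P l) * (1 - P i)
    - δ * P i

/-- `p` solves the mean field ODE system on `[0,∞)`. -/
def IsMFSolution (n m : ℕ) (Inc : Fin n → Fin m → ℕ) (β δ : ℝ) (f : ℕ → ℝ)
    (p : ℝ → Fin n → ℝ) : Prop :=
  ∀ t : ℝ, 0 ≤ t → HasDerivAt p (meanFieldG n m Inc β δ f (p t)) t

/-! ### Auxiliary lemmas -/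

section Aux
open Matrix

/-! #### Rayleigh quotient bound -/

lemma aux_rayleigh {n : ℕ} (W : Matrix (Fin n) (Fin n) ℝ) (hW : W.IsHermitian)
    (lam : ℝ) (hlam : ∀ i, hW.eigenvalues i ≤ lam) (x : Fin n → ℝ) :
    x ⬝ᵥ (W *ᵥ x) ≤ lam * (x ⬝ᵥ x) := by
  classical
  set U : Matrix (Fin n) (Fin n) ℝ := (hW.eigenvectorUnitary : Matrix (Fin n) (Fin n) ℝ) with hU
  set d : Fin n → ℝ := hW.eigenvalues with hd
  have hspec : W = U * Matrix.diagonal d * star U := by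
    have := hW.spectral_theorem
    simpa using this
  set y : Fin n → ℝ := star U *ᵥ x with hy
  have hUU : U * star U = 1 := (Matrix.mem_unitaryGroup_iff).mp hW.eigenvectorUnitary.2
  have hxvU : x ᵥ* U = y := by
    rw [hy]; ext i
    simp [Matrix.vecMul, Matrix.mulVec, dotProduct, Matrix.star_apply, mul_comm]
  have hWx : W *ᵥ x = U *ᵥ (Matrix.diagonal d *ᵥ y) := by
    rw [hy, Matrix.mulVec_mulVec, Matrix.mulVec_mulVec, ← hspec]
  have hq : x ⬝ᵥ (W *ᵥ x) = ∑ i, d i * (y i)^2 := by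
    rw [hWx, Matrix.dotProduct_mulVec, hxvU]
    simp [dotProduct, Matrix.mulVec_diagonal]
    exact Finset.sum_congr rfl fun i _ => by ring
  have hnorm : x ⬝ᵥ x = ∑ i, (y i)^2 := by
    have : x ⬝ᵥ x = (x ᵥ* U) ⬝ᵥ y := by
      rw [← Matrix.dotProduct_mulVec, Matrix.mulVec_mulVec, hUU, Matrix.one_mulVec]
    rw [this, hxvU]
    simp [dotProduct, sq]
  rw [hq, hnorm, Finset.mul_sum]
  exact Finset.sum_le_sum fun i _ => mul_le_mul_of_nonneg_right (hlam i) (sq_nonneg _)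

/-! #### Combinatorial identities for `PsiE` -/

lemma aux_weight_total {n : ℕ} (s : Finset (Fin n)) (P : Fin n → ℝ) :
    ∑ J ∈ s.powerset, (∏ j ∈ J, P j) * ∏ j ∈ s \ J, (1 - P j) = 1 := by
  rw [← Finset.prod_add]
  simp

lemma aux_weight_card_total {n : ℕ} (s : Finset (Fin n)) (P : Fin n → ℝ) :
    ∑ J ∈ s.powerset, (J.card : ℝ) * ((∏ j ∈ J, P j) * ∏ j ∈ s \ J, (1 - P j))
      = ∑ j ∈ s, P j := by
  classical
  induction s using Finset.induction_on with
  | empty => simp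
  | @insert a s ha ih =>
    rw [Finset.sum_powerset_insert ha, Finset.sum_insert ha, ← ih]
    have h1 : ∀ J ∈ s.powerset,
        ((J.card : ℝ) * ((∏ j ∈ J, P j) * ∏ j ∈ insert a s \ J, (1 - P j)))
        = (1 - P a) * ((J.card : ℝ) * ((∏ j ∈ J, P j) * ∏ j ∈ s \ J, (1 - P j))) := by
      intro J hJ
      have hJs := Finset.mem_powerset.mp hJ
      have haJ : a ∉ J := fun h => ha (hJs h)
      have : insert a s \ J = insert a (s \ J) := by
        rw [Finset.insert_sdiff_of_notMem _ haJ]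
      rw [this, Finset.prod_insert (fun h => ha (Finset.mem_sdiff.mp h).1)]
      ring
    have h2 : ∀ J ∈ s.powerset,
        (((insert a J).card : ℝ) * ((∏ j ∈ insert a J, P j) * ∏ j ∈ insert a s \ insert a J, (1 - P j)))
        = P a * (((J.card : ℝ) + 1) * ((∏ j ∈ J, P j) * ∏ j ∈ s \ J, (1 - P j))) := by
      intro J hJ
      have hJs := Finset.mem_powerset.mp hJ
      have haJ : a ∉ J := fun h => ha (hJs h)
      have hsd : insert a s \ insert a J = s \ J := by
        rw [Finset.insert_sdiff_insert, Finset.sdiff_insert_of_notMem ha]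
      rw [hsd, Finset.prod_insert haJ, Finset.card_insert_of_notMem haJ]
      push_cast
      ring
    rw [Finset.sum_congr rfl h1, Finset.sum_congr rfl h2, ← Finset.mul_sum, ← Finset.mul_sum]
    have hexp : ∑ i ∈ s.powerset, ((i.card : ℝ) + 1) * ((∏ j ∈ i, P j) * ∏ j ∈ s \ i, (1 - P j))
        = (∑ i ∈ s.powerset, (i.card : ℝ) * ((∏ j ∈ i, P j) * ∏ j ∈ s \ i, (1 - P j))) + 1 := by
      have : ∀ i ∈ s.powerset, ((i.card : ℝ) + 1) * ((∏ j ∈ i, P j) * ∏ j ∈ s \ i, (1 - P j))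
          = (i.card : ℝ) * ((∏ j ∈ i, P j) * ∏ j ∈ s \ i, (1 - P j))
            + (∏ j ∈ i, P j) * ∏ j ∈ s \ i, (1 - P j) := fun i _ => by ring
      rw [Finset.sum_congr rfl this, Finset.sum_add_distrib, aux_weight_total s P]
    rw [hexp]
    ring

lemma aux_psi_nonneg {n : ℕ} (e : Finset (Fin n)) (P : Fin n → ℝ)
    (hP : ∀ j ∈ e, P j ∈ Set.Icc (0:ℝ) 1) (l : ℕ) : 0 ≤ PsiE e P l := by
  refine Finset.sum_nonneg fun J hJ => ?_
  have hJe := (Finset.mem_powersetCard.mp hJ).1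
  refine mul_nonneg (Finset.prod_nonneg fun j hj => (hP j (hJe hj)).1)
    (Finset.prod_nonneg fun j hj => ?_)
  have := (hP j (Finset.mem_sdiff.mp hj).1).2
  linarith

lemma aux_sum_card_psi {n : ℕ} (e : Finset (Fin n)) (P : Fin n → ℝ) :
    ∑ l ∈ Finset.range (e.card + 1), (l : ℝ) * PsiE e P l = ∑ j ∈ e, P j := by
  classical
  rw [← aux_weight_card_total e P, Finset.powerset_card_disjiUnion]
  refine Eq.trans ?_ (Finset.sum_disjiUnion _ _ _).symm
  refine Finset.sum_congr rfl fun l _ => ?_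
  rw [PsiE, Finset.mul_sum]
  refine Finset.sum_congr rfl fun J hJ => ?_
  rw [(Finset.mem_powersetCard.mp hJ).2]

lemma aux_sum_f_psi_le {n : ℕ} (e : Finset (Fin n)) (P : Fin n → ℝ)
    (hP : ∀ j ∈ e, P j ∈ Set.Icc (0:ℝ) 1)
    (c₁ : ℕ) (c₂ : ℝ) (hc₁ : 1 ≤ c₁) (hc₂ : 0 < c₂)
    (f : ℕ → ℝ) (hf : ∀ x : ℕ, f x = if c₁ ≤ x then c₂ else 0) :
    ∑ l ∈ Finset.Icc 1 e.card, f l * PsiE e P l ≤ (c₂ / c₁) * ∑ j ∈ e, P j := by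
  have hstep : ∀ l ∈ Finset.Icc 1 e.card,
      f l * PsiE e P l ≤ (c₂ / c₁) * ((l : ℝ) * PsiE e P l) := by
    intro l hl
    have hpsi := aux_psi_nonneg e P hP l
    rw [hf l]
    split_ifs with h
    · have hc : (c₁ : ℝ) ≤ l := by exact_mod_cast h
      have hc0 : (0:ℝ) < c₁ := by exact_mod_cast hc₁
      have : c₂ ≤ c₂ / c₁ * l := by
        rw [div_mul_eq_mul_div, le_div_iff₀ hc0]
        nlinarith
      nlinarith
    · rw [zero_mul]
      exact mul_nonneg (le_of_lt (by positivity)) (mul_nonneg (Nat.cast_nonneg l) hpsi)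
  calc ∑ l ∈ Finset.Icc 1 e.card, f l * PsiE e P l
      ≤ ∑ l ∈ Finset.Icc 1 e.card, (c₂ / c₁) * ((l : ℝ) * PsiE e P l) :=
        Finset.sum_le_sum hstep
    _ = (c₂ / c₁) * ∑ l ∈ Finset.Icc 1 e.card, (l : ℝ) * PsiE e P l := by
        rw [Finset.mul_sum]
    _ = (c₂ / c₁) * ∑ l ∈ Finset.range (e.card + 1), (l : ℝ) * PsiE e P l := by
        congr 1
        have hins : Finset.range (e.card + 1) = insert 0 (Finset.Icc 1 e.card) := by
          ext x; simp; omega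
        rw [hins, Finset.sum_insert (by simp)]
        simp
    _ = (c₂ / c₁) * ∑ j ∈ e, P j := by rw [aux_sum_card_psi]

/-! #### Lipschitz estimates -/

lemma aux_abs_prod_le {α : Type*} (s : Finset α) (u : α → ℝ) (hu : ∀ j ∈ s, |u j| ≤ 3) :
    |∏ j ∈ s, u j| ≤ 3 ^ s.card := by
  rw [Finset.abs_prod]
  calc ∏ j ∈ s, |u j| ≤ ∏ j ∈ s, (3:ℝ) :=
        Finset.prod_le_prod (fun j _ => abs_nonneg _) hu
    _ = 3 ^ s.card := by rw [Finset.prod_const]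

lemma aux_prod_sub_prod_abs_le {α : Type*} (s : Finset α) (u v : α → ℝ)
    (hu : ∀ j ∈ s, |u j| ≤ 3) (hv : ∀ j ∈ s, |v j| ≤ 3) :
    |∏ j ∈ s, u j - ∏ j ∈ s, v j| ≤ 3 ^ s.card * ∑ j ∈ s, |u j - v j| := by
  classical
  induction s using Finset.induction_on with
  | empty => simp
  | @insert a s ha ih =>
    rw [Finset.prod_insert ha, Finset.prod_insert ha, Finset.sum_insert ha,
      Finset.card_insert_of_notMem ha]
    have hu' : ∀ j ∈ s, |u j| ≤ 3 := fun j hj => hu j (Finset.mem_insert_of_mem hj)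
    have hv' : ∀ j ∈ s, |v j| ≤ 3 := fun j hj => hv j (Finset.mem_insert_of_mem hj)
    have key : u a * ∏ j ∈ s, u j - v a * ∏ j ∈ s, v j
        = (u a - v a) * ∏ j ∈ s, u j + v a * (∏ j ∈ s, u j - ∏ j ∈ s, v j) := by ring
    rw [key]
    have h1 : |(u a - v a) * ∏ j ∈ s, u j| ≤ |u a - v a| * 3 ^ s.card := by
      rw [abs_mul]
      exact mul_le_mul_of_nonneg_left (aux_abs_prod_le s u hu') (abs_nonneg _)
    have h2 : |v a * (∏ j ∈ s, u j - ∏ j ∈ s, v j)|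
        ≤ 3 * (3 ^ s.card * ∑ j ∈ s, |u j - v j|) := by
      rw [abs_mul]
      exact mul_le_mul (hv a (Finset.mem_insert_self a s)) (ih hu' hv') (abs_nonneg _)
        (by norm_num)
    calc |(u a - v a) * ∏ j ∈ s, u j + v a * (∏ j ∈ s, u j - ∏ j ∈ s, v j)|
        ≤ |(u a - v a) * ∏ j ∈ s, u j| + |v a * (∏ j ∈ s, u j - ∏ j ∈ s, v j)| := abs_add_le _ _
      _ ≤ |u a - v a| * 3 ^ s.card + 3 * (3 ^ s.card * ∑ j ∈ s, |u j - v j|) := by linarith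
      _ ≤ 3 ^ (s.card + 1) * (|u a - v a| + ∑ j ∈ s, |u j - v j|) := by
          have hsum : (0:ℝ) ≤ ∑ j ∈ s, |u j - v j| :=
            Finset.sum_nonneg fun j _ => abs_nonneg _
          have := abs_nonneg (u a - v a)
          rw [pow_succ]
          nlinarith [pow_nonneg (by norm_num : (0:ℝ) ≤ 3) s.card]

lemma aux_psi_term_eq {n : ℕ} (e J : Finset (Fin n)) (hJ : J ⊆ e) (P : Fin n → ℝ) :
    (∏ j ∈ J, P j) * ∏ j ∈ e \ J, (1 - P j)
      = ∏ j ∈ e, (if j ∈ J then P j else 1 - P j) := by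
  classical
  rw [← Finset.union_sdiff_of_subset hJ, Finset.prod_union Finset.disjoint_sdiff]
  congr 1
  · exact Finset.prod_congr rfl fun j hj => by simp [hj]
  · refine Finset.prod_congr ?_ fun j hj => by
      simp [(Finset.mem_sdiff.mp hj).2]
    rw [Finset.union_sdiff_of_subset hJ]

lemma aux_psi_abs_le {n : ℕ} (e : Finset (Fin n)) (P : Fin n → ℝ)
    (hP : ∀ j, |P j| ≤ 2) (l : ℕ) : |PsiE e P l| ≤ 2^n * 3^n := by
  classical
  have hterm : ∀ J ∈ e.powersetCard l,
      |(∏ j ∈ J, P j) * ∏ j ∈ e \ J, (1 - P j)| ≤ (3:ℝ)^n := by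
    intro J hJ
    have hJe := (Finset.mem_powersetCard.mp hJ).1
    rw [aux_psi_term_eq e J hJe P]
    calc |∏ j ∈ e, (if j ∈ J then P j else 1 - P j)| ≤ 3 ^ e.card := by
          apply aux_abs_prod_le
          intro j _
          split_ifs
          · linarith [hP j]
          · have := abs_le.mp (hP j); rw [abs_le]; constructor <;> linarith [this.1, this.2]
      _ ≤ (3:ℝ)^n := by
          apply pow_le_pow_right₀ (by norm_num)
          simpa using Finset.card_le_card (Finset.subset_univ e)
  calc |PsiE e P l| ≤ ∑ J ∈ e.powersetCard l, |(∏ j ∈ J, P j) * ∏ j ∈ e \ J, (1 - P j)| :=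
        Finset.abs_sum_le_sum_abs _ _
    _ ≤ ∑ _J ∈ e.powersetCard l, (3:ℝ)^n := Finset.sum_le_sum hterm
    _ = (e.powersetCard l).card * (3:ℝ)^n := by rw [Finset.sum_const, nsmul_eq_mul]
    _ ≤ 2^n * 3^n := by
        have h1 : (e.powersetCard l).card ≤ 2^n := by
          calc (e.powersetCard l).card ≤ e.powerset.card :=
                Finset.card_le_card fun J hJ =>
                  Finset.mem_powerset.mpr (Finset.mem_powersetCard.mp hJ).1
            _ = 2 ^ e.card := Finset.card_powerset e
            _ ≤ 2 ^ n := Nat.pow_le_pow_right (by norm_num)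
                (by simpa using Finset.card_le_card (Finset.subset_univ e))
        have : ((e.powersetCard l).card : ℝ) ≤ (2:ℝ)^n := by exact_mod_cast h1
        exact mul_le_mul_of_nonneg_right this (by positivity)

lemma aux_psi_lip {n : ℕ} (e : Finset (Fin n)) (P Q : Fin n → ℝ)
    (hP : ∀ j, |P j| ≤ 2) (hQ : ∀ j, |Q j| ≤ 2) (l : ℕ) :
    |PsiE e P l - PsiE e Q l| ≤ 2^n * 3^n * ∑ j, |P j - Q j| := by
  classical
  set D := ∑ j, |P j - Q j| with hD
  have hD0 : 0 ≤ D := Finset.sum_nonneg fun j _ => abs_nonneg _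
  have hterm : ∀ J ∈ e.powersetCard l,
      |((∏ j ∈ J, P j) * ∏ j ∈ e \ J, (1 - P j))
        - ((∏ j ∈ J, Q j) * ∏ j ∈ e \ J, (1 - Q j))| ≤ (3:ℝ)^n * D := by
    intro J hJ
    have hJe := (Finset.mem_powersetCard.mp hJ).1
    rw [aux_psi_term_eq e J hJe P, aux_psi_term_eq e J hJe Q]
    have hb : ∀ (R : Fin n → ℝ), (∀ j, |R j| ≤ 2) → ∀ j ∈ e,
        |if j ∈ J then R j else 1 - R j| ≤ 3 := by
      intro R hR j _
      split_ifs
      · linarith [hR j]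
      · have := abs_le.mp (hR j); rw [abs_le]; constructor <;> linarith [this.1, this.2]
    calc |∏ j ∈ e, (if j ∈ J then P j else 1 - P j)
          - ∏ j ∈ e, (if j ∈ J then Q j else 1 - Q j)|
        ≤ 3 ^ e.card * ∑ j ∈ e, |(if j ∈ J then P j else 1 - P j)
            - (if j ∈ J then Q j else 1 - Q j)| :=
          aux_prod_sub_prod_abs_le e _ _ (hb P hP) (hb Q hQ)
      _ ≤ (3:ℝ)^n * D := by
          apply mul_le_mul
          · apply pow_le_pow_right₀ (by norm_num)
            simpa using Finset.card_le_card (Finset.subset_univ e)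
          · calc ∑ j ∈ e, |(if j ∈ J then P j else 1 - P j) - (if j ∈ J then Q j else 1 - Q j)|
                = ∑ j ∈ e, |P j - Q j| := by
                  refine Finset.sum_congr rfl fun j _ => ?_
                  split_ifs
                  · rfl
                  · rw [show (1 - P j) - (1 - Q j) = -(P j - Q j) by ring, abs_neg]
              _ ≤ D := Finset.sum_le_sum_of_subset_of_nonneg (Finset.subset_univ e)
                  fun j _ _ => abs_nonneg _
          · exact Finset.sum_nonneg fun j _ => abs_nonneg _
          · positivity
  calc |PsiE e P l - PsiE e Q l|
      = |∑ J ∈ e.powersetCard l, (((∏ j ∈ J, P j) * ∏ j ∈ e \ J, (1 - P j))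
          - ((∏ j ∈ J, Q j) * ∏ j ∈ e \ J, (1 - Q j)))| := by
        rw [PsiE, PsiE, ← Finset.sum_sub_distrib]
    _ ≤ ∑ J ∈ e.powersetCard l, |((∏ j ∈ J, P j) * ∏ j ∈ e \ J, (1 - P j))
          - ((∏ j ∈ J, Q j) * ∏ j ∈ e \ J, (1 - Q j))| := Finset.abs_sum_le_sum_abs _ _
    _ ≤ ∑ _J ∈ e.powersetCard l, (3:ℝ)^n * D := Finset.sum_le_sum hterm
    _ = (e.powersetCard l).card * ((3:ℝ)^n * D) := by rw [Finset.sum_const, nsmul_eq_mul]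
    _ ≤ 2^n * 3^n * D := by
        have h1 : (e.powersetCard l).card ≤ 2^n := by
          calc (e.powersetCard l).card ≤ e.powerset.card :=
                Finset.card_le_card fun J hJ =>
                  Finset.mem_powerset.mpr (Finset.mem_powersetCard.mp hJ).1
            _ = 2 ^ e.card := Finset.card_powerset e
            _ ≤ 2 ^ n := Nat.pow_le_pow_right (by norm_num)
                (by simpa using Finset.card_le_card (Finset.subset_univ e))
        have h2 : ((e.powersetCard l).card : ℝ) ≤ (2:ℝ)^n := by exact_mod_cast h1
        have h3 : (0:ℝ) ≤ (3:ℝ)^n * D := by positivity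
        nlinarith [pow_nonneg (by norm_num : (0:ℝ) ≤ 3) n, pow_nonneg (by norm_num : (0:ℝ) ≤ 2) n]

lemma aux_S_abs_le {n : ℕ} (e : Finset (Fin n)) (P : Fin n → ℝ) (hP : ∀ j, |P j| ≤ 2)
    (c₂ : ℝ) (hc₂ : 0 < c₂) (f : ℕ → ℝ) (hfb : ∀ l, |f l| ≤ c₂) :
    |∑ l ∈ Finset.Icc 1 e.card, f l * PsiE e P l| ≤ n * (c₂ * (2^n * 3^n)) := by
  calc |∑ l ∈ Finset.Icc 1 e.card, f l * PsiE e P l|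
      ≤ ∑ l ∈ Finset.Icc 1 e.card, |f l * PsiE e P l| := Finset.abs_sum_le_sum_abs _ _
    _ ≤ ∑ _l ∈ Finset.Icc 1 e.card, c₂ * (2^n * 3^n) := by
        refine Finset.sum_le_sum fun l _ => ?_
        rw [abs_mul]
        exact mul_le_mul (hfb l) (aux_psi_abs_le e P hP l) (abs_nonneg _) (le_of_lt hc₂)
    _ = (Finset.Icc 1 e.card).card * (c₂ * (2^n*3^n)) := by rw [Finset.sum_const, nsmul_eq_mul]
    _ ≤ n * (c₂ * (2^n * 3^n)) := by
        have h1 : (Finset.Icc 1 e.card).card ≤ n := by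
          rw [Nat.card_Icc]
          have : e.card ≤ n := by simpa using Finset.card_le_card (Finset.subset_univ e)
          omega
        have h2 : ((Finset.Icc 1 e.card).card : ℝ) ≤ n := by exact_mod_cast h1
        exact mul_le_mul_of_nonneg_right h2 (by positivity)

lemma aux_S_lip {n : ℕ} (e : Finset (Fin n)) (P Q : Fin n → ℝ)
    (hP : ∀ j, |P j| ≤ 2) (hQ : ∀ j, |Q j| ≤ 2)
    (c₂ : ℝ) (hc₂ : 0 < c₂) (f : ℕ → ℝ) (hfb : ∀ l, |f l| ≤ c₂) :
    |∑ l ∈ Finset.Icc 1 e.card, f l * PsiE e P l - ∑ l ∈ Finset.Icc 1 e.card, f l * PsiE e Q l|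
      ≤ n * (c₂ * (2^n * 3^n)) * ∑ j, |P j - Q j| := by
  set D := ∑ j, |P j - Q j| with hD
  have hD0 : 0 ≤ D := Finset.sum_nonneg fun j _ => abs_nonneg _
  calc |∑ l ∈ Finset.Icc 1 e.card, f l * PsiE e P l - ∑ l ∈ Finset.Icc 1 e.card, f l * PsiE e Q l|
      = |∑ l ∈ Finset.Icc 1 e.card, f l * (PsiE e P l - PsiE e Q l)| := by
        rw [← Finset.sum_sub_distrib]
        congr 1
        exact Finset.sum_congr rfl fun l _ => by ring
    _ ≤ ∑ l ∈ Finset.Icc 1 e.card, |f l * (PsiE e P l - PsiE e Q l)| :=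
        Finset.abs_sum_le_sum_abs _ _
    _ ≤ ∑ _l ∈ Finset.Icc 1 e.card, c₂ * (2^n * 3^n * D) := by
        refine Finset.sum_le_sum fun l _ => ?_
        rw [abs_mul]
        exact mul_le_mul (hfb l) (aux_psi_lip e P Q hP hQ l) (abs_nonneg _) (le_of_lt hc₂)
    _ = (Finset.Icc 1 e.card).card * (c₂ * (2^n * 3^n * D)) := by
        rw [Finset.sum_const, nsmul_eq_mul]
    _ ≤ n * (c₂ * (2^n * 3^n)) * D := by
        have h1 : (Finset.Icc 1 e.card).card ≤ n := by
          rw [Nat.card_Icc]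
          have : e.card ≤ n := by simpa using Finset.card_le_card (Finset.subset_univ e)
          omega
        have h2 : ((Finset.Icc 1 e.card).card : ℝ) ≤ n := by exact_mod_cast h1
        have h3 : (0:ℝ) ≤ c₂ * (2^n * 3^n * D) := by positivity
        nlinarith [mul_le_mul_of_nonneg_right h2 h3]

lemma aux_g_lip {n m : ℕ} (Inc : Fin n → Fin m → ℕ) (hInc : ∀ i h, Inc i h = 0 ∨ Inc i h = 1)
    (β δ : ℝ) (hβ : 0 < β) (hδ : 0 < δ)
    (c₂ : ℝ) (hc₂ : 0 < c₂) (f : ℕ → ℝ) (hfb : ∀ l, |f l| ≤ c₂)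
    (P Q : Fin n → ℝ) (hP : ∀ j, |P j| ≤ 2) (hQ : ∀ j, |Q j| ≤ 2) (i : Fin n) :
    |meanFieldG n m Inc β δ f P i - meanFieldG n m Inc β δ f Q i|
      ≤ (β * (4 * m * (n * (c₂ * (2^n * 3^n)))) + δ) * ∑ j, |P j - Q j| := by
  set D := ∑ j, |P j - Q j| with hD
  have hD0 : 0 ≤ D := Finset.sum_nonneg fun j _ => abs_nonneg _
  have hiD : |P i - Q i| ≤ D := by
    refine Finset.single_le_sum (f := fun j => |P j - Q j|) (fun j _ => abs_nonneg _)
      (Finset.mem_univ i)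
  set C := n * (c₂ * ((2:ℝ)^n * 3^n)) with hC
  have hC0 : 0 ≤ C := by positivity
  set TP := ∑ h : Fin m, (Inc i h : ℝ) *
      ∑ l ∈ Finset.Icc 1 (edgeOf Inc h).card, f l * PsiE (edgeOf Inc h) P l with hTP
  set TQ := ∑ h : Fin m, (Inc i h : ℝ) *
      ∑ l ∈ Finset.Icc 1 (edgeOf Inc h).card, f l * PsiE (edgeOf Inc h) Q l with hTQ
  have hIncb : ∀ h, |(Inc i h : ℝ)| ≤ 1 := by
    intro h
    rcases hInc i h with h' | h' <;> simp [h']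
  have hTQb : |TQ| ≤ m * C := by
    calc |TQ| ≤ ∑ h : Fin m, |(Inc i h : ℝ) *
        ∑ l ∈ Finset.Icc 1 (edgeOf Inc h).card, f l * PsiE (edgeOf Inc h) Q l| :=
          Finset.abs_sum_le_sum_abs _ _
      _ ≤ ∑ _h : Fin m, C := by
          refine Finset.sum_le_sum fun h _ => ?_
          rw [abs_mul]
          calc |(Inc i h : ℝ)| * |_| ≤ 1 * C := by
                exact mul_le_mul (hIncb h) (aux_S_abs_le _ Q hQ c₂ hc₂ f hfb) (abs_nonneg _)
                  (by norm_num)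
            _ = C := one_mul C
      _ = m * C := by rw [Finset.sum_const, nsmul_eq_mul, Finset.card_univ, Fintype.card_fin]
  have hTdiff : |TP - TQ| ≤ m * C * D := by
    calc |TP - TQ| = |∑ h : Fin m, (Inc i h : ℝ) *
        (∑ l ∈ Finset.Icc 1 (edgeOf Inc h).card, f l * PsiE (edgeOf Inc h) P l
          - ∑ l ∈ Finset.Icc 1 (edgeOf Inc h).card, f l * PsiE (edgeOf Inc h) Q l)| := by
          rw [hTP, hTQ, ← Finset.sum_sub_distrib]
          congr 1
          exact Finset.sum_congr rfl fun h _ => by ring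
      _ ≤ ∑ h : Fin m, |(Inc i h : ℝ) *
          (∑ l ∈ Finset.Icc 1 (edgeOf Inc h).card, f l * PsiE (edgeOf Inc h) P l
            - ∑ l ∈ Finset.Icc 1 (edgeOf Inc h).card, f l * PsiE (edgeOf Inc h) Q l)| :=
          Finset.abs_sum_le_sum_abs _ _
      _ ≤ ∑ _h : Fin m, C * D := by
          refine Finset.sum_le_sum fun h _ => ?_
          rw [abs_mul]
          calc |(Inc i h : ℝ)| * |_| ≤ 1 * (C * D) :=
                mul_le_mul (hIncb h) (aux_S_lip _ P Q hP hQ c₂ hc₂ f hfb) (abs_nonneg _)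
                  (by norm_num)
            _ = C * D := one_mul _
      _ = m * (C * D) := by rw [Finset.sum_const, nsmul_eq_mul, Finset.card_univ, Fintype.card_fin]
      _ = m * C * D := by ring
  have hkey : meanFieldG n m Inc β δ f P i - meanFieldG n m Inc β δ f Q i
      = β * ((TP - TQ) * (1 - P i) + TQ * (Q i - P i)) - δ * (P i - Q i) := by
    simp only [meanFieldG, ← hTP, ← hTQ]
    ring
  rw [hkey]
  have h1P : |1 - P i| ≤ 3 := by
    have := abs_le.mp (hP i); rw [abs_le]; constructor <;> linarith [this.1, this.2]
  have e1 : |(TP - TQ) * (1 - P i)| ≤ m * C * D * 3 := by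
    rw [abs_mul]
    exact mul_le_mul hTdiff h1P (abs_nonneg _) (by positivity)
  have e2 : |TQ * (Q i - P i)| ≤ m * C * D := by
    rw [abs_mul, abs_sub_comm (Q i) (P i)]
    exact mul_le_mul hTQb hiD (abs_nonneg _) (by positivity)
  have habs : |(TP - TQ) * (1 - P i) + TQ * (Q i - P i)| ≤ 4 * (↑m * C * D) :=
    le_trans (abs_add_le _ _) (by linarith)
  have hmCD : 0 ≤ ↑m * C * D := by positivity
  have hfull : |β * ((TP - TQ) * (1 - P i) + TQ * (Q i - P i)) - δ * (P i - Q i)|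
      ≤ β * (4 * (↑m * C * D)) + δ * D := by
    refine le_trans (abs_sub _ _) ?_
    rw [abs_mul, abs_mul, abs_of_pos hβ, abs_of_pos hδ]
    have h1 := mul_le_mul_of_nonneg_left habs (le_of_lt hβ)
    have h2 := mul_le_mul_of_nonneg_left hiD (le_of_lt hδ)
    linarith
  refine le_trans hfull ?_
  nlinarith [mul_nonneg (mul_nonneg (Nat.cast_nonneg m) hC0) hD0]


lemma decay_bound (F F' : ℝ → ℝ) (K b : ℝ)
    (hF : ∀ t ∈ Set.Icc (0:ℝ) b, HasDerivAt F (F' t) t)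
    (hF' : ∀ t ∈ Set.Icc (0:ℝ) b, F' t ≤ K * F t) :
    ∀ t ∈ Set.Icc (0:ℝ) b, F t ≤ F 0 * Real.exp (K * t) := by
  set G : ℝ → ℝ := fun t => F t * Real.exp (-K * t) with hG
  have hGderiv : ∀ t ∈ Set.Icc (0:ℝ) b,
      HasDerivAt G ((F' t - K * F t) * Real.exp (-K * t)) t := by
    intro t ht
    have h1 : HasDerivAt (fun t : ℝ => Real.exp (-K * t)) (-K * Real.exp (-K * t)) t := by
      have h2 : HasDerivAt (fun t : ℝ => -K * t) (-K) t := by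
        simpa using (hasDerivAt_id t).const_mul (-K)
      have h3 : HasDerivAt (fun s : ℝ => Real.exp (-K * s)) (Real.exp (-K * t) * -K) t :=
        (Real.hasDerivAt_exp (-K * t)).comp t h2
      simpa [mul_comm] using h3
    have := (hF t ht).mul h1
    refine this.congr_deriv ?_
    ring
  have hanti : AntitoneOn G (Set.Icc 0 b) := by
    apply antitoneOn_of_deriv_nonpos (convex_Icc 0 b)
    · intro t ht
      exact (hGderiv t ht).continuousAt.continuousWithinAt
    · intro t ht
      rw [interior_Icc] at ht
      exact (hGderiv t (Set.mem_Icc_of_Ioo ht)).differentiableAt.differentiableWithinAt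
    · intro t ht
      rw [interior_Icc] at ht
      rw [(hGderiv t (Set.mem_Icc_of_Ioo ht)).deriv]
      have := hF' t (Set.mem_Icc_of_Ioo ht)
      have he : 0 < Real.exp (-K * t) := Real.exp_pos _
      nlinarith
  intro t ht
  have h0 : (0:ℝ) ∈ Set.Icc (0:ℝ) b := Set.mem_Icc.mpr ⟨le_refl 0, ht.1.trans ht.2⟩
  have := hanti h0 ht ht.1
  have hG0 : G 0 = F 0 := by simp [hG]
  rw [hG0] at this
  have he : 0 < Real.exp (-K * t) := Real.exp_pos _
  have hexp : Real.exp (K * t) * Real.exp (-K * t) = 1 := by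
    rw [← Real.exp_add]; ring_nf; exact Real.exp_zero
  simp only [hG] at this
  have h5 := mul_le_mul_of_nonneg_right this (le_of_lt (Real.exp_pos (K*t)))
  have h7 : F t * Real.exp (-K*t) * Real.exp (K*t) = F t := by
    rw [mul_assoc, mul_comm (Real.exp (-K*t)), hexp, mul_one]
  linarith [h5, h7]

noncomputable def clampR (x : ℝ) : ℝ := max 0 (min x 1)

lemma clampR_mem (x : ℝ) : clampR x ∈ Set.Icc (0:ℝ) 1 := by
  constructor
  · exact le_max_left _ _
  · rw [clampR, max_le_iff]
    exact ⟨by norm_num, min_le_right _ _⟩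

lemma sub_clampR (x : ℝ) : x - clampR x = max (x-1) 0 + min x 0 := by
  rcases le_total x 0 with h | h
  · rw [clampR, min_eq_left (by linarith), max_eq_left h, max_eq_right (by linarith),
      min_eq_left h]
    ring
  · rcases le_total x 1 with h' | h'
    · rw [clampR, min_eq_left h', max_eq_right h, max_eq_right (by linarith),
        min_eq_right h]
      ring
    · rw [clampR, min_eq_right h', max_eq_right (by norm_num : (0:ℝ) ≤ 1),
        max_eq_left (by linarith), min_eq_right h]
      ring

lemma sq_max_hasDerivAt (x : ℝ) : HasDerivAt (fun y => max y 0 ^ 2) (2 * max x 0) x := by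
  rcases lt_trichotomy x 0 with h | h | h
  · have : (fun y : ℝ => max y 0 ^ 2) =ᶠ[nhds x] (fun _ => 0) := by
      filter_upwards [Iio_mem_nhds h] with y hy
      rw [max_eq_right (le_of_lt hy)]
      norm_num
    rw [max_eq_right (le_of_lt h), mul_zero]
    exact (hasDerivAt_const x (0:ℝ)).congr_of_eventuallyEq this
  · subst h
    rw [hasDerivAt_iff_isLittleO]
    simp only [max_self, ne_eq, OfNat.ofNat_ne_zero, not_false_eq_true, zero_pow, mul_zero,
      zero_mul, smul_zero, sub_zero, sub_self]
    rw [Asymptotics.isLittleO_iff]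
    intro c hc
    filter_upwards [Metric.ball_mem_nhds (0:ℝ) hc] with y hy
    rw [Metric.mem_ball, Real.dist_eq, sub_zero] at hy
    have h1 : max y 0 ≤ |y| := by
      rw [max_le_iff]; exact ⟨le_abs_self y, abs_nonneg y⟩
    have h2 : (0:ℝ) ≤ max y 0 := le_max_right _ _
    simp only [sub_zero, norm_pow, Real.norm_eq_abs]
    calc |max y 0| ^ 2 = max y 0 * max y 0 := by rw [sq, abs_of_nonneg h2]
      _ ≤ |y| * |y| := mul_le_mul h1 h1 h2 (abs_nonneg _)
      _ ≤ c * |y| := mul_le_mul_of_nonneg_right (le_of_lt hy) (abs_nonneg _)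
  · have : (fun y : ℝ => max y 0 ^ 2) =ᶠ[nhds x] (fun y => y ^ 2) := by
      filter_upwards [Ioi_mem_nhds h] with y hy
      rw [max_eq_left (le_of_lt hy)]
    rw [max_eq_left (le_of_lt h)]
    exact (by simpa [mul_comm] using hasDerivAt_pow 2 x : HasDerivAt (fun y : ℝ => y ^ 2) (2 * x) x).congr_of_eventuallyEq this

noncomputable def hfun (x : ℝ) : ℝ := max (x - 1) 0 ^ 2 + min x 0 ^ 2

lemma hfun_eq (x : ℝ) : hfun x = (x - clampR x) ^ 2 := by
  rw [sub_clampR, hfun]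
  have h : max (x-1) 0 * min x 0 = 0 := by
    rcases le_total x 0 with h | h
    · rw [max_eq_right (by linarith)]; ring
    · rw [min_eq_right h]; ring
  nlinarith [h]

lemma hfun_hasDerivAt (x : ℝ) :
    HasDerivAt hfun (2 * (x - clampR x)) x := by
  have h1 : HasDerivAt (fun y : ℝ => max (y - 1) 0 ^ 2) (2 * max (x - 1) 0) x := by
    have := (sq_max_hasDerivAt (x - 1)).comp x ((hasDerivAt_id x).sub_const (1:ℝ))
    exact this.congr_deriv (by ring)
  have h2 : HasDerivAt (fun y : ℝ => min y 0 ^ 2) (2 * min x 0) x := by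
    have hneg : HasDerivAt (fun y : ℝ => -y) (-1 : ℝ) x := by
      exact (hasDerivAt_id x).neg
    have := (sq_max_hasDerivAt (-x)).comp x hneg
    have hmx : ∀ y : ℝ, max (-y) 0 = - min y 0 := by
      intro y
      rcases le_total y 0 with h | h
      · rw [min_eq_left h, max_eq_left (by linarith)]
      · rw [min_eq_right h, max_eq_right (by linarith), neg_zero]
    have heq : (fun y : ℝ => max (-y) 0 ^ 2) = (fun y : ℝ => min y 0 ^ 2) := by
      funext y
      rw [hmx y, neg_pow]
      norm_num
    rw [show ((fun y : ℝ => max y 0 ^ 2) ∘ Neg.neg) = (fun y : ℝ => max (-y) 0 ^ 2) from rfl,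
      heq] at this
    refine this.congr_deriv ?_
    rw [hmx x]
    ring
  have := h1.add h2
  rw [sub_clampR]
  refine this.congr_deriv ?_
  ring

lemma clampR_eq_self {x : ℝ} (hx : x ∈ Set.Icc (0:ℝ) 1) : clampR x = x := by
  rw [clampR, min_eq_left hx.2, max_eq_right hx.1]

lemma clampR_of_nonpos {x : ℝ} (hx : x ≤ 0) : clampR x = 0 := by
  rw [clampR, min_eq_left (by linarith), max_eq_left hx]

lemma clampR_of_one_le {x : ℝ} (hx : 1 ≤ x) : clampR x = 1 := by
  rw [clampR, min_eq_right hx, max_eq_right (by norm_num)]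

lemma aux_T_nonneg {n m : ℕ} (Inc : Fin n → Fin m → ℕ)
    (f : ℕ → ℝ) (hf0 : ∀ l, 0 ≤ f l) (Q : Fin n → ℝ)
    (hQ : ∀ j, Q j ∈ Set.Icc (0:ℝ) 1) (i : Fin n) :
    0 ≤ ∑ h : Fin m, (Inc i h : ℝ) *
      ∑ l ∈ Finset.Icc 1 (edgeOf Inc h).card, f l * PsiE (edgeOf Inc h) Q l := by
  refine Finset.sum_nonneg fun h _ => mul_nonneg (Nat.cast_nonneg _) ?_
  refine Finset.sum_nonneg fun l _ => mul_nonneg (hf0 l) ?_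
  exact aux_psi_nonneg _ Q (fun j _ => hQ j) l

lemma aux_sign_term {n m : ℕ} (Inc : Fin n → Fin m → ℕ)
    (β δ : ℝ) (hβ : 0 < β) (hδ : 0 < δ)
    (f : ℕ → ℝ) (hf0 : ∀ l, 0 ≤ f l) (P : Fin n → ℝ) (i : Fin n) :
    (P i - clampR (P i)) * meanFieldG n m Inc β δ f (fun j => clampR (P j)) i ≤ 0 := by
  set Q : Fin n → ℝ := fun j => clampR (P j) with hQdef
  have hQ : ∀ j, Q j ∈ Set.Icc (0:ℝ) 1 := fun j => clampR_mem (P j)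
  set TQ := ∑ h : Fin m, (Inc i h : ℝ) *
      ∑ l ∈ Finset.Icc 1 (edgeOf Inc h).card, f l * PsiE (edgeOf Inc h) Q l with hTQ
  have hTQ0 : 0 ≤ TQ := aux_T_nonneg Inc f hf0 Q hQ i
  have hGQ : meanFieldG n m Inc β δ f Q i = β * TQ * (1 - Q i) - δ * Q i := rfl
  rcases le_or_gt (P i) 0 with h0 | h0
  · rcases eq_or_lt_of_le h0 with h0' | h0'
    · have : clampR (P i) = 0 := clampR_of_nonpos h0
      rw [this, h0']
      simp
    · have hcl : clampR (P i) = 0 := clampR_of_nonpos h0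
      have hQi : Q i = 0 := hcl
      rw [hGQ, hQi, hcl]
      have : 0 ≤ β * TQ * (1 - 0) - δ * 0 := by
        have := mul_nonneg (le_of_lt hβ) hTQ0
        nlinarith
      nlinarith
  · rcases le_or_gt (P i) 1 with h1 | h1
    · have : clampR (P i) = P i := clampR_eq_self ⟨le_of_lt h0, h1⟩
      rw [this]
      simp
    · have hcl : clampR (P i) = 1 := clampR_of_one_le (le_of_lt h1)
      have hQi : Q i = 1 := hcl
      rw [hGQ, hQi, hcl]
      have hG : β * TQ * (1 - 1) - δ * 1 = -δ := by ring
      rw [hG]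
      nlinarith

lemma aux_phi_deriv_le {n m : ℕ} (Inc : Fin n → Fin m → ℕ)
    (hInc : ∀ i h, Inc i h = 0 ∨ Inc i h = 1)
    (β δ : ℝ) (hβ : 0 < β) (hδ : 0 < δ)
    (c₂ : ℝ) (hc₂ : 0 < c₂) (f : ℕ → ℝ) (hfb : ∀ l, |f l| ≤ c₂) (hf0 : ∀ l, 0 ≤ f l)
    (P : Fin n → ℝ) (hP : ∀ j, P j ∈ Set.Icc (-1:ℝ) 2) :
    ∑ i, 2 * (P i - clampR (P i)) * meanFieldG n m Inc β δ f P i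
      ≤ (2 * ((β * (4 * m * (n * (c₂ * (2^n * 3^n)))) + δ) * n))
          * ∑ i, (P i - clampR (P i))^2 := by
  classical
  set Q : Fin n → ℝ := fun j => clampR (P j) with hQdef
  set L := β * (4 * m * (n * (c₂ * ((2:ℝ)^n * 3^n)))) + δ with hL
  have hL0 : 0 ≤ L := by positivity
  set D := ∑ j, |P j - Q j| with hD
  have hD0 : 0 ≤ D := Finset.sum_nonneg fun j _ => abs_nonneg _
  have hPb : ∀ j, |P j| ≤ 2 := by
    intro j
    have := hP j
    rw [abs_le]; exact ⟨by linarith [this.1], this.2⟩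
  have hQb : ∀ j, |Q j| ≤ 2 := by
    intro j
    have := clampR_mem (P j)
    rw [abs_le]
    constructor <;> simp only [hQdef] <;> linarith [this.1, this.2]
  have hsplit : ∀ i : Fin n, 2 * (P i - clampR (P i)) * meanFieldG n m Inc β δ f P i
      = 2 * ((P i - clampR (P i)) * meanFieldG n m Inc β δ f Q i)
        + 2 * ((P i - Q i) * (meanFieldG n m Inc β δ f P i - meanFieldG n m Inc β δ f Q i)) := by
    intro i
    simp only [hQdef]
    ring
  calc ∑ i, 2 * (P i - clampR (P i)) * meanFieldG n m Inc β δ f P i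
      = ∑ i, (2 * ((P i - clampR (P i)) * meanFieldG n m Inc β δ f Q i)
        + 2 * ((P i - Q i) * (meanFieldG n m Inc β δ f P i - meanFieldG n m Inc β δ f Q i))) :=
        Finset.sum_congr rfl fun i _ => hsplit i
    _ ≤ ∑ i, (0 + 2 * (|P i - Q i| * (L * D))) := by
        refine Finset.sum_le_sum fun i _ => ?_
        have hs := aux_sign_term Inc β δ hβ hδ f hf0 P i
        refine add_le_add (by linarith) ?_
        have h1 : (P i - Q i) * (meanFieldG n m Inc β δ f P i - meanFieldG n m Inc β δ f Q i)
            ≤ |P i - Q i| * (L * D) := by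
          calc (P i - Q i) * (meanFieldG n m Inc β δ f P i - meanFieldG n m Inc β δ f Q i)
              ≤ |(P i - Q i) * (meanFieldG n m Inc β δ f P i - meanFieldG n m Inc β δ f Q i)| :=
                le_abs_self _
            _ = |P i - Q i| * |meanFieldG n m Inc β δ f P i - meanFieldG n m Inc β δ f Q i| :=
                abs_mul _ _
            _ ≤ |P i - Q i| * (L * D) := by
                refine mul_le_mul_of_nonneg_left ?_ (abs_nonneg _)
                exact aux_g_lip Inc hInc β δ hβ hδ c₂ hc₂ f hfb P Q hPb hQb i
        linarith
    _ = ∑ i, (2 * L * D) * |P i - Q i| := Finset.sum_congr rfl fun i _ => by ring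
    _ = 2 * L * D ^ 2 := by rw [← Finset.mul_sum, ← hD]; ring
    _ ≤ 2 * L * (n * ∑ i, (P i - clampR (P i))^2) := by
        have hcs : D ^ 2 ≤ (n : ℝ) * ∑ i, (P i - clampR (P i))^2 := by
          have := sq_sum_le_card_mul_sum_sq (s := (Finset.univ : Finset (Fin n)))
            (f := fun j => |P j - Q j|)
          rw [Finset.card_univ, Fintype.card_fin] at this
          calc D ^ 2 ≤ (n : ℝ) * ∑ j, |P j - Q j| ^ 2 := by exact_mod_cast this
            _ = (n : ℝ) * ∑ i, (P i - clampR (P i))^2 := by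
                congr 1
                exact Finset.sum_congr rfl fun j _ => by rw [sq_abs]
        have h2L : 0 ≤ 2 * L := by linarith
        exact mul_le_mul_of_nonneg_left hcs h2L
    _ = (2 * (L * n)) * ∑ i, (P i - clampR (P i))^2 := by ring

lemma aux_invariance {n m : ℕ} (Inc : Fin n → Fin m → ℕ)
    (hInc : ∀ i h, Inc i h = 0 ∨ Inc i h = 1)
    (β δ : ℝ) (hβ : 0 < β) (hδ : 0 < δ) (c₂ : ℝ) (hc₂ : 0 < c₂)
    (f : ℕ → ℝ) (hfb : ∀ l, |f l| ≤ c₂) (hf0 : ∀ l, 0 ≤ f l)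
    (p : ℝ → Fin n → ℝ)
    (hsol : ∀ t : ℝ, 0 ≤ t → HasDerivAt p (meanFieldG n m Inc β δ f (p t)) t)
    (hinit : ∀ i, p 0 i ∈ Set.Icc (0 : ℝ) 1) :
    ∀ t, 0 ≤ t → ∀ i, p t i ∈ Set.Icc (0:ℝ) 1 := by
  classical
  set G := meanFieldG n m Inc β δ f with hGdef
  set KK := 2 * ((β * (4 * m * (n * (c₂ * ((2:ℝ)^n * 3^n)))) + δ) * n) with hKK
  have hcomp : ∀ (i : Fin n) (t : ℝ), 0 ≤ t → HasDerivAt (fun s => p s i) (G (p t) i) t := by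
    intro i t ht
    exact (ContinuousLinearMap.proj (R := ℝ) (φ := fun _ : Fin n => ℝ)
      i).hasFDerivAt.comp_hasDerivAt t (hsol t ht)
  set φ : ℝ → ℝ := fun t => ∑ i, hfun (p t i) with hφdef
  have hφderiv : ∀ t, 0 ≤ t →
      HasDerivAt φ (∑ i, 2 * (p t i - clampR (p t i)) * G (p t) i) t := by
    intro t ht
    apply HasDerivAt.fun_sum
    intro i _
    exact (hfun_hasDerivAt (p t i)).comp t (hcomp i t ht)
  have hφ0 : φ 0 = 0 := by
    rw [hφdef]
    refine Finset.sum_eq_zero fun i _ => ?_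
    rw [hfun_eq, clampR_eq_self (hinit i)]
    ring
  have hφnn : ∀ t, 0 ≤ φ t := by
    intro t
    exact Finset.sum_nonneg fun i _ => by rw [hfun_eq]; positivity
  have hφval : ∀ t, φ t = ∑ i, (p t i - clampR (p t i))^2 := by
    intro t
    exact Finset.sum_congr rfl fun i _ => hfun_eq _
  have hbound : ∀ t, 0 ≤ t → (∀ j, p t j ∈ Set.Icc (-1:ℝ) 2) →
      (∑ i, 2 * (p t i - clampR (p t i)) * G (p t) i) ≤ KK * φ t := by
    intro t ht hbig
    rw [hφval t]
    exact aux_phi_deriv_le Inc hInc β δ hβ hδ c₂ hc₂ f hfb hf0 (p t) hbig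
  by_contra hcon
  push_neg at hcon
  obtain ⟨T0, hT0pos, i0, hi0⟩ := hcon
  set N := {t : ℝ | 0 ≤ t ∧ ∃ i, p t i ∉ Set.Icc (0:ℝ) 1} with hN
  have hNne : N.Nonempty := ⟨T0, hT0pos, i0, hi0⟩
  have hNbdd : BddBelow N := ⟨0, fun x hx => hx.1⟩
  set T := sInf N with hT
  have hTmem0 : 0 ≤ T := le_csInf hNne fun x hx => hx.1
  have hgood_lt : ∀ s, 0 ≤ s → s < T → ∀ i, p s i ∈ Set.Icc (0:ℝ) 1 := by
    intro s hs hsT i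
    by_contra hbad
    exact absurd (csInf_le hNbdd ⟨hs, i, hbad⟩) (not_le.mpr hsT)
  have hgoodT : ∀ i, p T i ∈ Set.Icc (0:ℝ) 1 := by
    rcases eq_or_lt_of_le hTmem0 with h | h
    · intro i
      rw [← h]
      exact hinit i
    · intro i
      have hcontT : ContinuousAt (fun s => p s i) T := (hcomp i T hTmem0).continuousAt
      have hcls : T ∈ closure (Set.Ioo 0 T) := by
        rw [closure_Ioo (ne_of_lt h)]
        exact ⟨le_of_lt h, le_refl T⟩
      haveI hne : (nhdsWithin T (Set.Ioo 0 T)).NeBot :=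
        mem_closure_iff_nhdsWithin_neBot.mp hcls
      have htend : Tendsto (fun s => p s i) (nhdsWithin T (Set.Ioo 0 T)) (nhds (p T i)) :=
        hcontT.continuousWithinAt
      refine isClosed_Icc.mem_of_tendsto htend ?_
      filter_upwards [self_mem_nhdsWithin] with s hs
      exact hgood_lt s (le_of_lt hs.1) hs.2 i
  have hU : ∀ᶠ s in nhds T, ∀ i, p s i ∈ Set.Ioo (-1:ℝ) 2 := by
    have hcontT : ContinuousAt p T := (hsol T hTmem0).continuousAt
    have hmem : {P : Fin n → ℝ | ∀ i, P i ∈ Set.Ioo (-1:ℝ) 2} ∈ nhds (p T) := by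
      have heq : {P : Fin n → ℝ | ∀ i, P i ∈ Set.Ioo (-1:ℝ) 2}
          = Set.pi Set.univ (fun _ : Fin n => Set.Ioo (-1:ℝ) 2) := by
        ext x; simp [Set.mem_pi]
      rw [heq]
      refine set_pi_mem_nhds Set.finite_univ fun i _ => ?_
      refine IsOpen.mem_nhds isOpen_Ioo ?_
      have := hgoodT i
      exact ⟨by linarith [this.1], by linarith [this.2]⟩
    exact hcontT hmem
  obtain ⟨ε, hε, hball⟩ := Metric.eventually_nhds_iff.mp hU
  set b := T + ε/2 with hb
  have hTb : T < b := by rw [hb]; linarith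
  have hbig : ∀ s ∈ Set.Icc (0:ℝ) b, ∀ j, p s j ∈ Set.Icc (-1:ℝ) 2 := by
    intro s hs j
    rcases le_or_gt s T with h | h
    · rcases eq_or_lt_of_le h with h' | h'
      · subst h'
        have := hgoodT j
        exact ⟨by linarith [this.1], by linarith [this.2]⟩
      · have := hgood_lt s hs.1 h' j
        exact ⟨by linarith [this.1], by linarith [this.2]⟩
    · have hd : dist s T < ε := by
        rw [Real.dist_eq, abs_of_pos (by linarith)]
        have := hs.2
        rw [hb] at this
        linarith
      have := hball hd j
      exact ⟨le_of_lt this.1, le_of_lt this.2⟩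
  have hφb : ∀ t ∈ Set.Icc (0:ℝ) b, φ t ≤ φ 0 * Real.exp (KK * t) := by
    refine decay_bound φ (fun t => ∑ i, 2 * (p t i - clampR (p t i)) * G (p t) i) KK b
      (fun t ht => hφderiv t ht.1) (fun t ht => hbound t ht.1 (hbig t ht))
  have hφzero : ∀ t ∈ Set.Icc (0:ℝ) b, φ t = 0 := by
    intro t ht
    have h1 := hφb t ht
    rw [hφ0, zero_mul] at h1
    exact le_antisymm h1 (hφnn t)
  have hgood_b : ∀ t ∈ Set.Icc (0:ℝ) b, ∀ i, p t i ∈ Set.Icc (0:ℝ) 1 := by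
    intro t ht i
    have h0 : hfun (p t i) = 0 := by
      have hsum := hφzero t ht
      rw [hφdef] at hsum
      exact (Finset.sum_eq_zero_iff_of_nonneg
        (fun j _ => by rw [hfun_eq]; positivity)).mp hsum i (Finset.mem_univ i)
    rw [hfun_eq] at h0
    have heq : p t i = clampR (p t i) := by
      have := pow_eq_zero_iff (n := 2) (by norm_num) |>.mp h0
      linarith
    rw [heq]
    exact clampR_mem _
  obtain ⟨x, hxN, hxb⟩ := (csInf_lt_iff hNbdd hNne).mp (lt_of_eq_of_lt hT.symm hTb)
  obtain ⟨i, hi⟩ := hxN.2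
  exact hi (hgood_b x ⟨hxN.1, le_of_lt hxb⟩ i)

lemma aux_T_le {n m : ℕ} (Inc : Fin n → Fin m → ℕ)
    (hInc : ∀ i h, Inc i h = 0 ∨ Inc i h = 1)
    (c₁ : ℕ) (c₂ : ℝ) (hc₁ : 1 ≤ c₁) (hc₂ : 0 < c₂)
    (f : ℕ → ℝ) (hf : ∀ x : ℕ, f x = if c₁ ≤ x then c₂ else 0)
    (W : Matrix (Fin n) (Fin n) ℝ)
    (hWdef : ∀ i j, W i j = ((∑ h, Inc i h * Inc j h : ℕ) : ℝ))
    (P : Fin n → ℝ) (hP : ∀ j, P j ∈ Set.Icc (0:ℝ) 1) (i : Fin n) :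
    ∑ h : Fin m, (Inc i h : ℝ) *
        ∑ l ∈ Finset.Icc 1 (edgeOf Inc h).card, f l * PsiE (edgeOf Inc h) P l
      ≤ (c₂ / c₁) * ∑ j, W i j * P j := by
  classical
  have hedge : ∀ h : Fin m, ∑ j ∈ edgeOf Inc h, P j = ∑ j, (Inc j h : ℝ) * P j := by
    intro h
    rw [edgeOf, Finset.sum_filter]
    refine Finset.sum_congr rfl fun j _ => ?_
    rcases hInc j h with h' | h' <;> simp [h']
  calc ∑ h : Fin m, (Inc i h : ℝ) *
        ∑ l ∈ Finset.Icc 1 (edgeOf Inc h).card, f l * PsiE (edgeOf Inc h) P l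
      ≤ ∑ h : Fin m, (Inc i h : ℝ) * ((c₂ / c₁) * ∑ j ∈ edgeOf Inc h, P j) := by
        refine Finset.sum_le_sum fun h _ => ?_
        refine mul_le_mul_of_nonneg_left ?_ (Nat.cast_nonneg _)
        exact aux_sum_f_psi_le (edgeOf Inc h) P (fun j _ => hP j) c₁ c₂ hc₁ hc₂ f hf
    _ = ∑ h : Fin m, ∑ j : Fin n, (c₂ / c₁) * ((Inc i h : ℝ) * ((Inc j h : ℝ) * P j)) := by
        refine Finset.sum_congr rfl fun h _ => ?_
        rw [hedge h, Finset.mul_sum, Finset.mul_sum]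
        refine Finset.sum_congr rfl fun j _ => by ring
    _ = ∑ j : Fin n, ∑ h : Fin m, (c₂ / c₁) * ((Inc i h : ℝ) * ((Inc j h : ℝ) * P j)) :=
        Finset.sum_comm
    _ = (c₂ / c₁) * ∑ j, (∑ h : Fin m, (Inc i h : ℝ) * (Inc j h : ℝ)) * P j := by
        rw [Finset.mul_sum]
        refine Finset.sum_congr rfl fun j _ => ?_
        rw [Finset.sum_mul, Finset.mul_sum]
        refine Finset.sum_congr rfl fun h _ => by ring
    _ = (c₂ / c₁) * ∑ j, W i j * P j := by
        congr 1
        refine Finset.sum_congr rfl fun j _ => ?_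
        rw [hWdef i j]
        push_cast
        ring

/-- Global asymptotic stability for a collective contagion model: with the threshold
infection function `f x = c₂ · 𝟙(x ≥ c₁)` (`c₁ ≥ 1` an integer, `c₂ > 0`), if
`β c₂ λ(W)/(δ c₁) < 1` then every solution of the mean field hypergraph SIS system with
initial data in `[0,1]^n` converges to the origin. -/
theorem meanField_global_stability_collective
    (n m : ℕ) (hn : 0 < n) (Inc : Fin n → Fin m → ℕ)
    (hInc : ∀ i h, Inc i h = 0 ∨ Inc i h = 1)
    (β δ : ℝ) (hβ : 0 < β) (hδ : 0 < δ)
    (c₁ : ℕ) (c₂ : ℝ) (hc₁ : 1 ≤ c₁) (hc₂ : 0 < c₂)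
    (f : ℕ → ℝ) (hf : ∀ x : ℕ, f x = if c₁ ≤ x then c₂ else 0)
    (W : Matrix (Fin n) (Fin n) ℝ)
    (hWdef : ∀ i j, W i j = ((∑ h, Inc i h * Inc j h : ℕ) : ℝ))
    (hW : W.IsHermitian)
    (hspec : β * c₂ *
        (Finset.univ.sup'
          (by simpa using Finset.univ_nonempty_iff.mpr (Fin.pos_iff_nonempty.mp hn))
          hW.eigenvalues) / (δ * (c₁ : ℝ)) < 1)
    (p : ℝ → Fin n → ℝ) (hsol : IsMFSolution n m Inc β δ f p)
    (hinit : ∀ i, p 0 i ∈ Set.Icc (0 : ℝ) 1) :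
    Tendsto p atTop (nhds 0) := by
  classical
  have hfb : ∀ l, |f l| ≤ c₂ := by
    intro l
    rw [hf l]
    split_ifs
    · rw [abs_of_pos hc₂]
    · rw [abs_zero]; exact le_of_lt hc₂
  have hf0 : ∀ l, 0 ≤ f l := by
    intro l
    rw [hf l]
    split_ifs
    · exact le_of_lt hc₂
    · exact le_refl 0
  set G := meanFieldG n m Inc β δ f with hGdef
  have hgood : ∀ t, 0 ≤ t → ∀ i, p t i ∈ Set.Icc (0:ℝ) 1 :=
    aux_invariance Inc hInc β δ hβ hδ c₂ hc₂ f hfb hf0 p hsol hinit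
  have hne : (Finset.univ : Finset (Fin n)).Nonempty :=
    Finset.univ_nonempty_iff.mpr (Fin.pos_iff_nonempty.mp hn)
  set lam := Finset.univ.sup' hne hW.eigenvalues with hlamdef
  have hlam : ∀ i, hW.eigenvalues i ≤ lam := fun i => Finset.le_sup' _ (Finset.mem_univ i)
  have hspec' : β * c₂ * lam / (δ * c₁) < 1 := hspec
  have hc₁R : (0:ℝ) < c₁ := by exact_mod_cast hc₁
  have hK2' : β * (c₂ / c₁) * lam < δ := by
    rw [div_lt_one (by positivity)] at hspec'
    rw [show β * (c₂ / c₁) * lam = β * c₂ * lam / c₁ by ring, div_lt_iff₀ hc₁R]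
    nlinarith
  set K2 := 2 * (β * (c₂ / c₁) * lam - δ) with hK2def
  have hK2neg : K2 < 0 := by rw [hK2def]; linarith
  have hcomp : ∀ (i : Fin n) (t : ℝ), 0 ≤ t → HasDerivAt (fun s => p s i) (G (p t) i) t := by
    intro i t ht
    exact (ContinuousLinearMap.proj (R := ℝ) (φ := fun _ : Fin n => ℝ)
      i).hasFDerivAt.comp_hasDerivAt t (hsol t ht)
  set V : ℝ → ℝ := fun t => ∑ i, (p t i)^2 with hVdef
  have hVnn : ∀ t, 0 ≤ V t := fun t => Finset.sum_nonneg fun i _ => sq_nonneg _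
  have hVderiv : ∀ t, 0 ≤ t → HasDerivAt V (∑ i, 2 * p t i * G (p t) i) t := by
    intro t ht
    apply HasDerivAt.fun_sum
    intro i _
    have := (hcomp i t ht).fun_pow 2
    simpa using this
  have hVbound : ∀ t, 0 ≤ t → ∑ i, 2 * p t i * G (p t) i ≤ K2 * V t := by
    intro t ht
    set P := p t with hPdef
    have hP : ∀ j, P j ∈ Set.Icc (0:ℝ) 1 := hgood t ht
    have hTle : ∀ i, ∑ h : Fin m, (Inc i h : ℝ) *
        ∑ l ∈ Finset.Icc 1 (edgeOf Inc h).card, f l * PsiE (edgeOf Inc h) P l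
          ≤ (c₂ / c₁) * ∑ j, W i j * P j :=
      fun i => aux_T_le Inc hInc c₁ c₂ hc₁ hc₂ f hf W hWdef P hP i
    have hTnn : ∀ i, 0 ≤ ∑ h : Fin m, (Inc i h : ℝ) *
        ∑ l ∈ Finset.Icc 1 (edgeOf Inc h).card, f l * PsiE (edgeOf Inc h) P l :=
      fun i => aux_T_nonneg Inc f hf0 P hP i
    have hterm : ∀ i, 2 * P i * G P i
        ≤ 2 * (β * ((c₂ / c₁) * (P i * ∑ j, W i j * P j)) - δ * (P i)^2) := by
      intro i
      set T := ∑ h : Fin m, (Inc i h : ℝ) *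
        ∑ l ∈ Finset.Icc 1 (edgeOf Inc h).card, f l * PsiE (edgeOf Inc h) P l with hT
      have hGi : G P i = β * T * (1 - P i) - δ * P i := rfl
      rw [hGi]
      have h0 := (hP i).1
      have h1 := (hP i).2
      have hTn : 0 ≤ T := hTnn i
      have hTl : T ≤ (c₂ / c₁) * ∑ j, W i j * P j := hTle i
      have hstep1 : P i * (β * T * (1 - P i)) ≤ P i * (β * T) := by
        have : β * T * (1 - P i) ≤ β * T := by nlinarith [mul_nonneg (le_of_lt hβ) hTn]
        exact mul_le_mul_of_nonneg_left this h0
      have hstep2 : P i * (β * T) ≤ β * ((c₂ / c₁) * (P i * ∑ j, W i j * P j)) := by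
        have := mul_le_mul_of_nonneg_left hTl h0
        nlinarith
      nlinarith
    have hWsum : ∑ i, P i * ∑ j, W i j * P j ≤ lam * ∑ i, (P i)^2 := by
      have := aux_rayleigh W hW lam hlam P
      have hdp : P ⬝ᵥ (W *ᵥ P) = ∑ i, P i * ∑ j, W i j * P j := by
        simp [dotProduct, Matrix.mulVec]
      have hdp2 : P ⬝ᵥ P = ∑ i, (P i)^2 := by
        simp [dotProduct, sq]
      rw [hdp, hdp2] at this
      exact this
    calc ∑ i, 2 * P i * G P i
        ≤ ∑ i, 2 * (β * ((c₂ / c₁) * (P i * ∑ j, W i j * P j)) - δ * (P i)^2) :=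
          Finset.sum_le_sum fun i _ => hterm i
      _ = 2 * β * (c₂ / c₁) * (∑ i, P i * ∑ j, W i j * P j) - 2 * δ * ∑ i, (P i)^2 := by
          rw [Finset.mul_sum, Finset.mul_sum, ← Finset.sum_sub_distrib]
          exact Finset.sum_congr rfl fun i _ => by ring
      _ ≤ 2 * β * (c₂ / c₁) * (lam * ∑ i, (P i)^2) - 2 * δ * ∑ i, (P i)^2 := by
          have hc : 0 ≤ 2 * β * (c₂ / c₁) := by positivity
          have := mul_le_mul_of_nonneg_left hWsum hc
          linarith
      _ = K2 * V t := by
          rw [hK2def, hVdef]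
          ring
  have hVle : ∀ t, 0 ≤ t → V t ≤ V 0 * Real.exp (K2 * t) := by
    intro t ht
    exact decay_bound V (fun s => ∑ i, 2 * p s i * G (p s) i) K2 t
      (fun s hs => hVderiv s hs.1) (fun s hs => hVbound s hs.1) t ⟨ht, le_refl t⟩
  have hexp : Tendsto (fun t : ℝ => V 0 * Real.exp (K2 * t)) atTop (nhds 0) := by
    have h1 : Tendsto (fun t : ℝ => (-K2) * t) atTop atTop :=
      (tendsto_const_mul_atTop_of_pos (by linarith)).2 tendsto_id
    have h2 : Tendsto (fun t : ℝ => K2 * t) atTop atBot := by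
      have := tendsto_neg_atTop_atBot.comp h1
      simpa only [Function.comp_def, neg_mul, neg_neg] using this
    have h3 : Tendsto (fun t : ℝ => Real.exp (K2 * t)) atTop (nhds 0) :=
      Real.tendsto_exp_atBot.comp h2
    simpa using h3.const_mul (V 0)
  have hVtend : Tendsto V atTop (nhds 0) := by
    refine tendsto_of_tendsto_of_tendsto_of_le_of_le' tendsto_const_nhds hexp ?_ ?_
    · filter_upwards with t using hVnn t
    · filter_upwards [eventually_ge_atTop (0:ℝ)] with t ht using hVle t ht
  rw [tendsto_pi_nhds]
  intro i
  have hsq : Tendsto (fun t => (p t i)^2) atTop (nhds 0) := by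
    refine tendsto_of_tendsto_of_tendsto_of_le_of_le' tendsto_const_nhds hVtend ?_ ?_
    · filter_upwards with t using sq_nonneg _
    · filter_upwards with t
      exact Finset.single_le_sum (f := fun j => (p t j)^2) (fun j _ => sq_nonneg _)
        (Finset.mem_univ i)
  have habs : Tendsto (fun t => |p t i|) atTop (nhds 0) := by
    have h1 : Tendsto (fun t => Real.sqrt ((p t i)^2)) atTop (nhds (Real.sqrt 0)) :=
      (Real.continuous_sqrt.tendsto 0).comp hsq
    rw [Real.sqrt_zero] at h1
    have heq : (fun t => Real.sqrt ((p t i)^2)) = fun t => |p t i| := by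
      funext t
      exact Real.sqrt_sq_eq_abs _
    rwa [heq] at h1
  have : Tendsto (fun t => p t i) atTop (nhds 0) := by
    have hnegabs := habs.neg
    rw [neg_zero] at hnegabs
    refine tendsto_of_tendsto_of_tendsto_of_le_of_le' hnegabs habs ?_ ?_
    · filter_upwards with t using neg_abs_le _
    · filter_upwards with t using le_abs_self _
  simpa using this
end Aux
end

section
/- Consider the exact stochastic hypergraph SIS process with concave infection function f (f(0)=0, f nonnegative), infection strength β, recovery rate δ, and each node initially infected independently with probability i₀. Then ℙ(∑_{i=1}^n X_i(t) > 0) ≤ n · i₀ · exp((β f(1) λ(W) − δ) t) for all t ≥ 0. In particular, if β f(1) λ(W)/δ < 1, the disease vanishes at an exponential rate. -/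
/-!
Since `f` is concave with `f 0 = 0`, it lies below the chord `k ↦ f 1 * k`, so the infection
rate of node `i` is at most the linear rate `β f(1) (W x)_i`. Taking expectations, the vector
`y(t)` of infection probabilities is nonnegative and satisfies `y' ≤ (β f(1) W − δ I) y`
componentwise. Hence `d/dt ‖y‖² = 2 ⟨y, y'⟩ ≤ 2 ⟨y, (β f(1) W − δ I) y⟩ ≤ 2 (β f(1) λ(W) − δ) ‖y‖²`
by the Rayleigh bound, and Grönwall gives `‖y(t)‖ ≤ √n i₀ exp((β f(1) λ(W) − δ) t)`. The union
bound and Cauchy–Schwarz finish: `ℙ(∑ X_i(t) > 0) ≤ ∑ y_i(t) ≤ √n ‖y(t)‖`.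
-/

open MeasureTheory ProbabilityTheory Filter Finset

/-- The hypergraph SIS infection rate `λ_i(x) = β ∑_h I_{ih} f(∑_j I_{jh} x_j)`. -/
noncomputable def infRate (n m : ℕ) (Inc : Fin n → Fin m → ℕ) (β : ℝ) (f : ℕ → ℝ)
    (x : Fin n → ℕ) (i : Fin n) : ℝ :=
  β * ∑ h : Fin m, (Inc i h : ℝ) * f (∑ j, Inc j h * x j)

open Matrix

theorem apply_le_apply_one_mul_of_concave {f : ℕ → ℝ}
    (hconc : ∀ k : ℕ, 1 ≤ k → f (k + 1) - f k ≤ f k - f (k - 1)) (hf0 : f 0 = 0) (k : ℕ) :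
    f k ≤ f 1 * k := by
  have hincr : ∀ k : ℕ, f (k + 1) - f k ≤ f 1 := by
    intro k
    induction k with
    | zero => simp [hf0]
    | succ k ih =>
      have := hconc (k + 1) (by omega)
      rw [Nat.add_sub_cancel] at this
      linarith
  induction k with
  | zero => simp [hf0]
  | succ k ih => push_cast; linarith [hincr k]

open scoped MatrixOrder in
theorem Matrix.IsHermitian.dotProduct_mulVec_le {ι : Type*} [Fintype ι] [DecidableEq ι]
    {W : Matrix ι ι ℝ} (hW : W.IsHermitian) {lam : ℝ} (hlam : ∀ j, hW.eigenvalues j ≤ lam)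
    (v : ι → ℝ) : v ⬝ᵥ W *ᵥ v ≤ lam * (v ⬝ᵥ v) := by
  have hle : W ≤ algebraMap ℝ (Matrix ι ι ℝ) lam := by
    rw [le_algebraMap_iff_spectrum_le hW.isSelfAdjoint, hW.spectrum_real_eq_range_eigenvalues]
    rintro _ ⟨j, rfl⟩
    exact hlam j
  simpa [sub_mulVec, dotProduct_sub, Algebra.algebraMap_eq_smul_one, smul_mulVec,
    dotProduct_smul] using (le_iff.mp hle).dotProduct_mulVec_nonneg v

theorem Matrix.IsHermitian.dotProduct_smul_sub_smul_one_mulVec_le {ι : Type*} [Fintype ι]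
    [DecidableEq ι] {W : Matrix ι ι ℝ} (hW : W.IsHermitian) {lam : ℝ}
    (hlam : ∀ j, hW.eigenvalues j ≤ lam) {c : ℝ} (hc : 0 ≤ c) (d : ℝ) (v : ι → ℝ) :
    v ⬝ᵥ (c • W - d • 1) *ᵥ v ≤ (c * lam - d) * (v ⬝ᵥ v) := by
  have hW_le := hW.dotProduct_mulVec_le hlam v
  simp only [sub_mulVec, smul_mulVec, one_mulVec, dotProduct_sub, dotProduct_smul, smul_eq_mul]
  nlinarith

theorem sum_le_card_mul_of_dotProduct_self_le {ι : Type*} [Fintype ι] {v : ι → ℝ} {a : ℝ}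
    (ha : 0 ≤ a) (hv : v ⬝ᵥ v ≤ Fintype.card ι * a ^ 2) : ∑ i, v i ≤ Fintype.card ι * a := by
  have hsq : (∑ i, v i) ^ 2 ≤ (Fintype.card ι * a) ^ 2 :=
    calc (∑ i, v i) ^ 2 ≤ Fintype.card ι * v ⬝ᵥ v := by
          simpa [dotProduct, sq] using sq_sum_le_card_mul_sum_sq (s := univ) (f := v)
      _ ≤ Fintype.card ι * (Fintype.card ι * a ^ 2) := by gcongr
      _ = (Fintype.card ι * a) ^ 2 := by ring
  exact (abs_le_of_sq_le_sq hsq (by positivity)).trans' (le_abs_self _)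

theorem dotProduct_self_le_exp_of_deriv_le_mulVec {ι : Type*} [Fintype ι]
    {M : Matrix ι ι ℝ} {K : ℝ} (hM : ∀ v : ι → ℝ, v ⬝ᵥ M *ᵥ v ≤ K * (v ⬝ᵥ v))
    {y y' : ℝ → ι → ℝ} (hy : ∀ i, ∀ s, 0 ≤ s → HasDerivAt (fun s => y s i) (y' s i) s)
    (hy_nonneg : ∀ s i, 0 ≤ y s i) (hy' : ∀ s i, y' s i ≤ (M *ᵥ y s) i) {t : ℝ} (ht : 0 ≤ t) :
    y t ⬝ᵥ y t ≤ y 0 ⬝ᵥ y 0 * Real.exp (2 * K * t) := by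
  have hderiv : ∀ s, 0 ≤ s → HasDerivAt (fun s => y s ⬝ᵥ y s) (2 * (y s ⬝ᵥ y' s)) s := by
    intro s hs
    refine (HasDerivAt.fun_sum fun i (_ : i ∈ univ) =>
      (hy i s hs).fun_mul (hy i s hs)).congr_deriv ?_
    simp only [dotProduct, mul_sum]
    exact sum_congr rfl fun i _ => by ring
  have hbound : ∀ s, 2 * (y s ⬝ᵥ y' s) ≤ 2 * K * (y s ⬝ᵥ y s) := by
    intro s
    have : y s ⬝ᵥ y' s ≤ y s ⬝ᵥ M *ᵥ y s :=
      sum_le_sum fun i _ => mul_le_mul_of_nonneg_left (hy' s i) (hy_nonneg s i)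
    linarith [hM (y s)]
  simpa [gronwallBound_ε0] using le_gronwallBound_of_liminf_deriv_right_le (K := 2 * K) (ε := 0)
    (fun s hs => (hderiv s hs.1).continuousAt.continuousWithinAt)
    (fun s hs r hr => (hderiv s hs.1).hasDerivWithinAt.liminf_right_slope_le hr)
    le_rfl (fun s _ => by simpa using hbound s) t ⟨ht, le_rfl⟩

theorem sum_le_card_mul_exp_of_deriv_le_mulVec {ι : Type*} [Fintype ι]
    {M : Matrix ι ι ℝ} {K : ℝ} (hM : ∀ v : ι → ℝ, v ⬝ᵥ M *ᵥ v ≤ K * (v ⬝ᵥ v))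
    {y y' : ℝ → ι → ℝ} (hy : ∀ i, ∀ s, 0 ≤ s → HasDerivAt (fun s => y s i) (y' s i) s)
    (hy_nonneg : ∀ s i, 0 ≤ y s i) (hy' : ∀ s i, y' s i ≤ (M *ᵥ y s) i) {a : ℝ}
    (hy0 : ∀ i, y 0 i = a) (ha : 0 ≤ a) {t : ℝ} (ht : 0 ≤ t) :
    ∑ i, y t i ≤ Fintype.card ι * (a * Real.exp (K * t)) := by
  refine sum_le_card_mul_of_dotProduct_self_le (by positivity) ?_
  calc y t ⬝ᵥ y t ≤ y 0 ⬝ᵥ y 0 * Real.exp (2 * K * t) :=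
        dotProduct_self_le_exp_of_deriv_le_mulVec hM hy hy_nonneg hy' ht
    _ = Fintype.card ι * (a * Real.exp (K * t)) ^ 2 := by
        rw [show 2 * K * t = K * t + K * t by ring, Real.exp_add]
        simp [dotProduct, hy0]
        ring

section Probability

variable {Ω : Type*} [MeasurableSpace Ω] {μ : Measure Ω}

theorem MeasureTheory.Integrable.comp_of_forall_mem [IsFiniteMeasure μ] {α : Type*}
    [MeasurableSpace α] [MeasurableSingletonClass α] {E : Type*} [NormedAddCommGroup E]
    {S : Set α} (hS : S.Finite) {X : Ω → α} (hX : Measurable X) (hXS : ∀ ω, X ω ∈ S)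
    (F : α → E) :
    Integrable (fun ω => F (X ω)) μ := by
  have : Finite S := hS.to_subtype
  exact (Integrable.of_finite (f := fun a : S => F a)).comp_measurable (hX.subtype_mk (h := hXS))

theorem integral_mulVec {κ ι : Type*} [Fintype ι] (M : Matrix κ ι ℝ) {Z : Ω → ι → ℝ}
    (hZ : ∀ j, Integrable (fun ω => Z ω j) μ) (i : κ) :
    ∫ ω, (M *ᵥ Z ω) i ∂μ = (M *ᵥ fun j => ∫ ω, Z ω j ∂μ) i := by
  simp only [mulVec, dotProduct]
  rw [integral_finsetSum _ fun j _ => (hZ j).const_mul _]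
  simp_rw [integral_const_mul]

theorem integral_natCast_eq_measureReal {Z : Ω → ℕ} (hZ : Measurable Z)
    (h01 : ∀ ω, Z ω = 0 ∨ Z ω = 1) : ∫ ω, (Z ω : ℝ) ∂μ = μ.real {ω | Z ω = 1} := by
  have hind : (fun ω => (Z ω : ℝ)) = {ω | Z ω = 1}.indicator 1 := by
    ext ω
    rcases h01 ω with h | h <;> simp [h]
  rw [hind]
  exact integral_indicator_one (hZ (measurableSet_singleton 1))

theorem measureReal_sum_pos_le [IsFiniteMeasure μ] {ι : Type*} [Fintype ι] {Z : Ω → ι → ℕ}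
    (hZ : ∀ i, Measurable fun ω => Z ω i) (h01 : ∀ ω i, Z ω i = 0 ∨ Z ω i = 1) :
    μ.real {ω | 0 < ∑ i, Z ω i} ≤ ∑ i, ∫ ω, (Z ω i : ℝ) ∂μ := by
  simp_rw [integral_natCast_eq_measureReal (hZ _) (h01 · _)]
  refine (measureReal_mono fun ω hω => ?_).trans (measureReal_iUnion_fintype_le _)
  obtain ⟨i, -, hi⟩ := exists_ne_zero_of_sum_ne_zero (Nat.pos_iff_ne_zero.mp hω)
  exact Set.mem_iUnion.mpr ⟨i, (h01 ω i).resolve_left hi⟩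

end Probability

section HypergraphSIS

variable {n m : ℕ} {Inc : Fin n → Fin m → ℕ} {β : ℝ} {f : ℕ → ℝ}

theorem infRate_nonneg (hβ : 0 ≤ β) (hf : ∀ k, 0 ≤ f k) (x : Fin n → ℕ) (i : Fin n) :
    0 ≤ infRate n m Inc β f x i :=
  mul_nonneg hβ (sum_nonneg fun _ _ => mul_nonneg (Nat.cast_nonneg _) (hf _))

theorem infRate_le_mulVec (hβ : 0 ≤ β) (hf : ∀ k : ℕ, f k ≤ f 1 * k)
    {W : Matrix (Fin n) (Fin n) ℝ} (hW : ∀ i j, W i j = ((∑ h, Inc i h * Inc j h : ℕ) : ℝ))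
    (x : Fin n → ℕ) (i : Fin n) :
    infRate n m Inc β f x i ≤ β * f 1 * (W *ᵥ fun j => (x j : ℝ)) i := by
  calc infRate n m Inc β f x i
      ≤ β * ∑ h, (Inc i h : ℝ) * (f 1 * (∑ j, Inc j h * x j : ℕ)) := by
        unfold infRate
        gcongr with h
        exact hf _
    _ = β * f 1 * (W *ᵥ fun j => (x j : ℝ)) i := by
        simp only [mulVec, dotProduct, hW]
        push_cast
        simp only [mul_sum, sum_mul]
        rw [sum_comm]
        exact sum_congr rfl fun j _ => sum_congr rfl fun h _ => by ring

theorem one_sub_mul_infRate_sub_le_mulVec (hβ : 0 ≤ β) (hf_nonneg : ∀ k, 0 ≤ f k)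
    (hf : ∀ k : ℕ, f k ≤ f 1 * k) {W : Matrix (Fin n) (Fin n) ℝ}
    (hW : ∀ i j, W i j = ((∑ h, Inc i h * Inc j h : ℕ) : ℝ)) (δ : ℝ) (x : Fin n → ℕ)
    (i : Fin n) :
    (1 - (x i : ℝ)) * infRate n m Inc β f x i - δ * x i ≤
      (((β * f 1) • W - δ • 1) *ᵥ fun j => (x j : ℝ)) i := by
  have hle : (1 - (x i : ℝ)) * infRate n m Inc β f x i ≤ infRate n m Inc β f x i :=
    mul_le_of_le_one_left (infRate_nonneg hβ hf_nonneg x i) (by simp)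
  simp only [sub_mulVec, smul_mulVec, one_mulVec, Pi.sub_apply, Pi.smul_apply, smul_eq_mul]
  linarith [infRate_le_mulVec hβ hf hW x i]

end HypergraphSIS

/-- Exponential decay for the exact stochastic hypergraph SIS process with concave
infection function: if each node is initially infected independently with probability
`i₀`, then `ℙ(∑_i X_i(t) > 0) ≤ n i₀ exp((β f(1) λ(W) − δ) t)` for all `t ≥ 0`.
The dynamics is encoded via the Kolmogorov forward equations for the means. -/
theorem exact_process_exponential_decay
    (n m : ℕ) (hn : 0 < n) (Inc : Fin n → Fin m → ℕ)
    (β δ : ℝ) (hβ : 0 < β)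
    (f : ℕ → ℝ)
    (hconc : ∀ k : ℕ, 1 ≤ k → f (k + 1) - f k ≤ f k - f (k - 1))
    (hf0 : f 0 = 0) (hnonneg : ∀ k, 0 ≤ f k)
    (W : Matrix (Fin n) (Fin n) ℝ)
    (hWdef : ∀ i j, W i j = ((∑ h, Inc i h * Inc j h : ℕ) : ℝ))
    (hW : W.IsHermitian)
    (Ω : Type*) [MeasurableSpace Ω] (μ : Measure Ω) [IsProbabilityMeasure μ]
    (X : ℝ → Ω → Fin n → ℕ)
    (hmeas : ∀ t, Measurable (X t))
    (hval : ∀ t ω i, X t ω i = 0 ∨ X t ω i = 1)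
    (i₀ : ℝ) (hi₀ : i₀ ∈ Set.Icc (0 : ℝ) 1)
    (hinit : ∀ i, μ {ω | X 0 ω i = 1} = ENNReal.ofReal i₀)
    (hdyn : ∀ i : Fin n, ∀ t : ℝ, 0 ≤ t →
      HasDerivAt (fun s => ∫ ω, ((X s ω i : ℝ)) ∂μ)
        (∫ ω, ((1 - (X t ω i : ℝ)) * infRate n m Inc β f (X t ω) i
            - δ * (X t ω i : ℝ)) ∂μ) t) :
    ∀ t : ℝ, 0 ≤ t →
      (μ {ω | 0 < ∑ i, X t ω i}).toReal ≤
        (n : ℝ) * i₀ * Real.exp ((β * f 1 *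
          (Finset.univ.sup'
            (by simpa using Finset.univ_nonempty_iff.mpr (Fin.pos_iff_nonempty.mp hn))
            hW.eigenvalues) - δ) * t) := by
  intro t ht
  set lam := univ.sup' _ hW.eigenvalues
  set K := β * f 1 * lam - δ
  set M := (β * f 1) • W - δ • 1
  have hlam : ∀ j, hW.eigenvalues j ≤ lam := fun j => le_sup' hW.eigenvalues (mem_univ j)
  have hflin := apply_le_apply_one_mul_of_concave hconc hf0
  have hM : ∀ v, v ⬝ᵥ M *ᵥ v ≤ K * (v ⬝ᵥ v) :=
    hW.dotProduct_smul_sub_smul_one_mulVec_le hlam (mul_nonneg hβ.le (hnonneg 1)) δ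
  have hX_meas : ∀ s i, Measurable fun ω => X s ω i := fun s i =>
    (measurable_pi_apply i).comp (hmeas s)
  have hint : ∀ s (F : (Fin n → ℕ) → ℝ), Integrable (fun ω => F (X s ω)) μ := fun s =>
    Integrable.comp_of_forall_mem (Set.finite_Iic 1) (hmeas s)
      fun ω i => (hval s ω i).elim (fun h => h ▸ zero_le_one) (·.le)
  have hmean0 : ∀ i, ∫ ω, (X 0 ω i : ℝ) ∂μ = i₀ := fun i => by
    rw [integral_natCast_eq_measureReal (hX_meas 0 i) (hval 0 · i), measureReal_def,
      hinit, ENNReal.toReal_ofReal hi₀.1]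
  have hdrift : ∀ s i, ∫ ω, ((1 - (X s ω i : ℝ)) * infRate n m Inc β f (X s ω) i
      - δ * (X s ω i : ℝ)) ∂μ ≤ (M *ᵥ fun j => ∫ ω, (X s ω j : ℝ) ∂μ) i := fun s i =>
    (integral_mono (hint s fun x => (1 - (x i : ℝ)) * infRate n m Inc β f x i - δ * x i)
      (hint s fun x => (M *ᵥ fun j => (x j : ℝ)) i) fun ω =>
      one_sub_mul_infRate_sub_le_mulVec hβ.le hnonneg hflin hWdef δ (X s ω) i).trans_eq
        (integral_mulVec _ (fun j => hint s fun x => (x j : ℝ)) i)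
  calc (μ {ω | 0 < ∑ i, X t ω i}).toReal ≤ ∑ i, ∫ ω, (X t ω i : ℝ) ∂μ :=
        measureReal_sum_pos_le (hX_meas t) (hval t)
    _ ≤ n * (i₀ * Real.exp (K * t)) := by
        simpa using sum_le_card_mul_exp_of_deriv_le_mulVec hM hdyn
          (fun s i => integral_nonneg fun _ => Nat.cast_nonneg _) hdrift hmean0 hi₀.1 ht
    _ = n * i₀ * Real.exp (K * t) := by ring
end
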